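/- Let V be a real vector space, g a symmetric bilinear form on V, ξ ∈ V with g(ξ,ξ) = -1, and η(X) = g(X,ξ). Let λ, κ, σ be real constants, set c = (1/3)(λ + κσ), and define R(X,Y)Z = c·(g(Y,Z)•X − g(X,Z)•Y). Suppose α is a symmetric bilinear form on V satisfying α(R(X,Y)Z, W) + α(Z, R(X,Y)W) = 0 for all X, Y, Z, W ∈ V. Then either λ = −κσ, or α(Y, ξ) = −η(Y)·α(ξ,ξ) for all Y ∈ V. -/

import Mathlib

/-!
Evaluate the Ricci commutation identity at `(X, Y, Z, W) = (Y, ξ, ξ, ξ)`. Since `g(ξ,ξ) = -1`,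
`R(Y,ξ)ξ = -c (Y + η(Y) ξ)`, so by symmetry of `α` the identity reads
`-2c (α(Y,ξ) + η(Y) α(ξ,ξ)) = 0`. Either `c = 0`, i.e. `λ = -κσ`, or the bracket vanishes.
-/

namespace LinearMap.BilinForm

variable {K V : Type*} [Field K] [AddCommGroup V] [Module K V]

theorem constCurvature_apply_unit_unit (g : LinearMap.BilinForm K V) {ξ : V} (hξ : g ξ ξ = -1)
    (c : K) {R : V → V → V → V} (hR : ∀ X Y Z : V, R X Y Z = c • (g Y Z • X - g X Z • Y)) (Y : V) :
    R Y ξ ξ = -c • (Y + g Y ξ • ξ) := by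
  rw [hR, hξ]
  module

theorem mul_apply_unit_add_eq_zero_of_ricci_identity [NeZero (2 : K)]
    (g : LinearMap.BilinForm K V) {ξ : V} (hξ : g ξ ξ = -1) {c : K}
    {R : V → V → V → V} (hR : ∀ X Y Z : V, R X Y Z = c • (g Y Z • X - g X Z • Y))
    {α : LinearMap.BilinForm K V} (hαsymm : ∀ X Y : V, α X Y = α Y X)
    (hcomm : ∀ X Y Z W : V, α (R X Y Z) W + α Z (R X Y W) = 0) (Y : V) :
    c * (α Y ξ + g Y ξ * α ξ ξ) = 0 := by
  have h := hcomm Y ξ ξ ξ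
  rw [constCurvature_apply_unit_unit g hξ c hR, hαsymm ξ] at h
  simp only [map_smul, map_add, LinearMap.smul_apply, LinearMap.add_apply, smul_eq_mul] at h
  have h2 : (2 : K) * (c * (α Y ξ + g Y ξ * α ξ ξ)) = 0 := by linear_combination -h
  exact (mul_eq_zero.mp h2).resolve_left two_ne_zero

end LinearMap.BilinForm

theorem stmt_10_general (V : Type*) [AddCommGroup V] [Module ℝ V]
    (g : LinearMap.BilinForm ℝ V)
    (ξ : V) (hξ : g ξ ξ = -1)
    (η : V → ℝ) (hη : ∀ X : V, η X = g X ξ)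
    (lam κ σ c : ℝ) (hc : c = (1 / 3) * (lam + κ * σ))
    (R : V → V → V → V)
    (hR : ∀ X Y Z : V, R X Y Z = c • (g Y Z • X - g X Z • Y))
    (α : LinearMap.BilinForm ℝ V) (hαsymm : ∀ X Y : V, α X Y = α Y X)
    (hcomm : ∀ X Y Z W : V, α (R X Y Z) W + α Z (R X Y W) = 0) :
    lam = -(κ * σ) ∨ ∀ Y : V, α Y ξ = -(η Y * α ξ ξ) := by
  rcases eq_or_ne c 0 with hc0 | hc0
  · left
    linarith
  · right
    intro Y
    have h := LinearMap.BilinForm.mul_apply_unit_add_eq_zero_of_ricci_identity g hξ hR hαsymm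
      hcomm Y
    rw [mul_eq_zero, or_iff_right hc0] at h
    rw [hη]
    linarith

/-- If a symmetric bilinear form `α` satisfies the Ricci commutation identity
`α(R(X,Y)Z, W) + α(Z, R(X,Y)W) = 0` for the constant curvature tensor
`R(X,Y)Z = c (g(Y,Z)X − g(X,Z)Y)` with `c = (1/3)(λ + κσ)`, where `g(ξ,ξ) = -1`
and `η(X) = g(X,ξ)`, then either `λ = −κσ` or `α(Y,ξ) = −η(Y) α(ξ,ξ)` for all `Y`. -/
theorem stmt_10 (V : Type*) [AddCommGroup V] [Module ℝ V]
    (g : LinearMap.BilinForm ℝ V) (hgsymm : ∀ X Y : V, g X Y = g Y X)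
    (ξ : V) (hξ : g ξ ξ = -1)
    (η : V → ℝ) (hη : ∀ X : V, η X = g X ξ)
    (lam κ σ c : ℝ) (hc : c = (1 / 3) * (lam + κ * σ))
    (R : V → V → V → V)
    (hR : ∀ X Y Z : V, R X Y Z = c • (g Y Z • X - g X Z • Y))
    (α : LinearMap.BilinForm ℝ V) (hαsymm : ∀ X Y : V, α X Y = α Y X)
    (hcomm : ∀ X Y Z W : V, α (R X Y Z) W + α Z (R X Y W) = 0) :
    lam = -(κ * σ) ∨ ∀ Y : V, α Y ξ = -(η Y * α ξ ξ) :=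
  stmt_10_general V g ξ hξ η hη lam κ σ c hc R hR α hαsymm hcomm
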